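/- arXiv:2111.05780 — 3 statements merged into one kernel-verified Lean document; each statement's English description precedes it below -/
import Mathlib

section
/- For every tree T with 2n vertices and every pair of positive integers a, b with a + b = 2n, the vertex set of T can be partitioned into sets R of size a and B of size b, with tree structures T_R on R and T_B on B, such that every edge of T_R and of T_B joins vertices at distance at most 2 in T. -/
/-!
Call a vertex set connected when it induces a connected subgraph of the square `G²`. Every finite
subtree `S` of `G` with root `r` is `{r}` or the disjoint union of a subtree `S'` rooted at `r` and
a subtree `C` rooted at a neighbour `c` of `r`. By induction along this decomposition, for every
`k ≤ |S|` there is a `k`-subset `A ⊆ S` with `A` and `S \ A` connected, `r ∈ A` unless `A = ∅`,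
and `S \ A` containing `r` or a neighbour of `r` unless it is empty. For `k ≤ |S'|` split `S'`
and add all of `C` to the second part: it meets `C` at distance two from the vertex near `r`.
For `k > |S'|` keep `S'` whole in the first part and split `C` with the roles of the two parts
exchanged. Applied to the whole tree, each part has a spanning tree in `G²`.
-/

namespace SimpleGraph

variable {V : Type*} (G : SimpleGraph V)

def square : SimpleGraph V where
  Adj x y := x ≠ y ∧ (G.Adj x y ∨ ∃ w, G.Adj x w ∧ G.Adj w y)
  symm := ⟨fun _ _ ⟨hne, h⟩ =>
    ⟨hne.symm, h.imp (fun h => h.symm) fun ⟨w, hxw, hwy⟩ => ⟨w, hwy.symm, hxw.symm⟩⟩⟩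
  loopless := ⟨fun _ h => h.1 rfl⟩

variable {G}

lemma Adj.square {x y : V} (h : G.Adj x y) : G.square.Adj x y := ⟨h.ne, .inl h⟩

lemma dist_le_two_of_square_adj {x y : V} (h : G.square.Adj x y) : G.dist x y ≤ 2 := by
  obtain ⟨-, hxy | ⟨w, hxw, hwy⟩⟩ := h
  · exact (dist_le hxy.toWalk).trans (by simp)
  · exact dist_le (.cons hxw hwy.toWalk)

lemma exists_isTree_dist_le_two {s : Finset V} (hs : s.Nonempty)
    (h : (G.square.induce (s : Set V)).Preconnected) :
    ∃ T : SimpleGraph {x // x ∈ s}, T.IsTree ∧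
      ∀ u v : {x // x ∈ s}, T.Adj u v → G.dist u.1 v.1 ≤ 2 := by
  have : Nonempty (s : Set V) := hs.coe_sort
  obtain ⟨T, hle, hT⟩ := (⟨h⟩ : (G.square.induce (s : Set V)).Connected).exists_isTree_le
  exact ⟨T, hT, fun u v huv => dist_le_two_of_square_adj (hle huv)⟩

lemma square_adj_of_adj_of_eq_or_adj {x y z : V} (hxy : G.Adj x y) (hyz : y = z ∨ G.Adj y z)
    (hxz : x ≠ z) : G.square.Adj x z := by
  obtain rfl | hyz := hyz
  · exact hxy.square
  · exact ⟨hxz, .inr ⟨y, hxy, hyz⟩⟩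

lemma preconnected_induce_union {H : SimpleGraph V} {s t : Set V}
    (hs : (H.induce s).Preconnected) (ht : (H.induce t).Preconnected)
    (hst : s.Nonempty → ∃ x ∈ s, ∃ y ∈ t, H.Adj x y) : (H.induce (s ∪ t)).Preconnected := by
  obtain rfl | hne := s.eq_empty_or_nonempty
  · rwa [Set.empty_union]
  obtain ⟨x, hx, y, hy, hxy⟩ := hst hne
  exact (connected_induce_union hs ht hx hy hxy).preconnected

variable [DecidableEq V]

variable (G) in
/-- The sets `S` satisfying `G.Branch r S` are exactly the vertex sets of the finite subtrees
of `G` containing `r`. -/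
inductive Branch : V → Finset V → Prop
  | singleton (r : V) : Branch r {r}
  | attach {r c : V} {S C : Finset V} :
      Branch r S → Branch c C → Disjoint S C → G.Adj r c → Branch r (S ∪ C)

lemma Branch.root_mem {r : V} {S : Finset V} (h : G.Branch r S) : r ∈ S := by
  induction h with
  | singleton r => exact Finset.mem_singleton_self r
  | attach _ _ _ _ ih => exact Finset.mem_union_left _ ih

lemma Branch.preconnected_square {r : V} {S : Finset V} (h : G.Branch r S) :
    (G.square.induce (S : Set V)).Preconnected := by
  induction h with
  | singleton r =>
    rw [Finset.coe_singleton]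
    exact Preconnected.of_subsingleton
  | attach hS hC _ hrc ihS ihC =>
    rw [Finset.coe_union]
    exact (connected_induce_union ihS ihC hS.root_mem hC.root_mem hrc.square).preconnected

variable (G) in
/-- The conditions at the root `r` are what allow splittings of two branches to be glued along
an edge between their roots. -/
structure IsRootedSplit (r : V) (S A : Finset V) : Prop where
  subset : A ⊆ S
  preconnected_left : (G.square.induce (A : Set V)).Preconnected
  preconnected_right : (G.square.induce ((S \ A : Finset V) : Set V)).Preconnected
  root_mem : A.Nonempty → r ∈ A
  exists_near_root : (S \ A).Nonempty → ∃ z ∈ S \ A, r = z ∨ G.Adj r z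

section attach

variable {r c : V} {S C : Finset V} (hSC : Disjoint S C) (hrc : G.Adj r c)
include hSC hrc

lemma IsRootedSplit.attach_left {A : Finset V} (hA : G.IsRootedSplit r S A) (hc : c ∈ C)
    (hC : (G.square.induce (C : Set V)).Preconnected) : G.IsRootedSplit r (S ∪ C) A where
  subset := hA.subset.trans Finset.subset_union_left
  preconnected_left := hA.preconnected_left
  preconnected_right := by
    have hdiff : (S ∪ C) \ A = S \ A ∪ C := by
      rw [Finset.union_sdiff_distrib, Finset.sdiff_eq_self_of_disjoint
        (hSC.mono_left hA.subset).symm]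
    rw [hdiff, Finset.coe_union]
    refine preconnected_induce_union hA.preconnected_right hC fun hne => ?_
    obtain ⟨z, hz, hrz⟩ := hA.exists_near_root hne
    have hzc : z ≠ c := fun h => Finset.disjoint_left.1 hSC (Finset.sdiff_subset hz) (h ▸ hc)
    exact ⟨z, hz, c, hc, (square_adj_of_adj_of_eq_or_adj hrc.symm hrz hzc.symm).symm⟩
  root_mem := hA.root_mem
  exists_near_root _ := ⟨c, Finset.mem_sdiff.2 ⟨Finset.mem_union_right _ hc,
    fun hcA => Finset.disjoint_left.1 hSC (hA.subset hcA) hc⟩, .inr hrc⟩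

lemma IsRootedSplit.attach_right {B : Finset V} (hB : G.IsRootedSplit c C B) (hr : r ∈ S)
    (hS : (G.square.induce (S : Set V)).Preconnected) (hne : (C \ B).Nonempty) :
    G.IsRootedSplit r (S ∪ C) (S ∪ C \ B) := by
  have hdiff : (S ∪ C) \ (S ∪ C \ B) = B := by
    ext x
    have hBC : x ∈ B → x ∈ C := fun h => hB.subset h
    have hSC' : x ∈ S → x ∉ C := fun h => Finset.disjoint_left.1 hSC h
    simp only [Finset.mem_sdiff, Finset.mem_union]
    tauto
  refine ⟨Finset.union_subset_union le_rfl Finset.sdiff_subset, ?_,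
    by rw [hdiff]; exact hB.preconnected_left, fun _ => Finset.mem_union_left _ hr, fun hB' => ?_⟩
  · rw [Finset.coe_union]
    refine preconnected_induce_union hS hB.preconnected_right fun _ => ?_
    obtain ⟨z, hz, hcz⟩ := hB.exists_near_root hne
    have hrz : r ≠ z := fun h => Finset.disjoint_left.1 hSC hr (h ▸ Finset.sdiff_subset hz)
    exact ⟨r, hr, z, hz, square_adj_of_adj_of_eq_or_adj hrc hcz hrz⟩
  · rw [hdiff] at hB' ⊢
    exact ⟨c, hB.root_mem hB', .inr hrc⟩

end attach

lemma isRootedSplit_singleton_empty (r : V) : G.IsRootedSplit r {r} ∅ where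
  subset := Finset.empty_subset _
  preconnected_left := by
    rw [Finset.coe_empty]
    exact Preconnected.of_subsingleton
  preconnected_right := by
    rw [Finset.sdiff_empty, Finset.coe_singleton]
    exact Preconnected.of_subsingleton
  root_mem h := absurd h Finset.not_nonempty_empty
  exists_near_root _ := ⟨r, by simp, .inl rfl⟩

lemma isRootedSplit_singleton_self (r : V) : G.IsRootedSplit r {r} {r} where
  subset := le_rfl
  preconnected_left := by
    rw [Finset.coe_singleton]
    exact Preconnected.of_subsingleton
  preconnected_right := by
    rw [Finset.sdiff_self, Finset.coe_empty]
    exact Preconnected.of_subsingleton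
  root_mem _ := Finset.mem_singleton_self r
  exists_near_root h := by simp at h

theorem Branch.exists_isRootedSplit {r : V} {S : Finset V} (h : G.Branch r S) {k : ℕ}
    (hk : k ≤ S.card) : ∃ A, G.IsRootedSplit r S A ∧ A.card = k := by
  induction h generalizing k with
  | singleton r =>
    rcases Nat.le_one_iff_eq_zero_or_eq_one.1 (Finset.card_singleton r ▸ hk) with rfl | rfl
    · exact ⟨∅, isRootedSplit_singleton_empty r, Finset.card_empty⟩
    · exact ⟨{r}, isRootedSplit_singleton_self r, Finset.card_singleton r⟩
  | @attach r c S C hS hC hSC hrc ihS ihC =>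
    rw [Finset.card_union_of_disjoint hSC] at hk
    by_cases hkS : k ≤ S.card
    · obtain ⟨A, hA, rfl⟩ := ihS hkS
      exact ⟨A, hA.attach_left hSC hrc hC.root_mem hC.preconnected_square, rfl⟩
    · obtain ⟨B, hB, hBcard⟩ := ihC (k := C.card - (k - S.card)) (Nat.sub_le _ _)
      have hcard : (C \ B).card = k - S.card := by
        rw [Finset.card_sdiff_of_subset hB.subset]
        omega
      refine ⟨S ∪ C \ B, hB.attach_right hSC hrc hS.root_mem hS.preconnected_square
        (Finset.card_pos.1 (by omega)), ?_⟩
      rw [Finset.card_union_of_disjoint (hSC.mono_right Finset.sdiff_subset)]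
      omega

lemma Branch.insert {r u v : V} {S : Finset V} (h : G.Branch r S) (hu : u ∈ S) (hv : v ∉ S)
    (huv : G.Adj u v) : G.Branch r (insert v S) := by
  induction h with
  | singleton r =>
    rw [Finset.mem_singleton] at hu
    subst hu
    rw [Finset.insert_eq, Finset.union_comm]
    exact .attach (.singleton u) (.singleton v) (Finset.disjoint_singleton_right.2 hv) huv
  | @attach r c S C hS hC hSC hrc ihS ihC =>
    rw [Finset.mem_union] at hu
    rw [Finset.mem_union, not_or] at hv
    rcases hu with hu | hu
    · rw [← Finset.insert_union]
      exact .attach (ihS hu hv.1) hC (Finset.disjoint_insert_left.2 ⟨hv.2, hSC⟩) hrc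
    · rw [← Finset.union_insert]
      exact .attach hS (ihC hu hv.2) (Finset.disjoint_insert_right.2 ⟨hv.1, hSC⟩) hrc

theorem Connected.branch_univ [Fintype V] (hG : G.Connected) (r : V) :
    G.Branch r Finset.univ := by
  classical
  obtain ⟨S, hS, hmax⟩ := (Finset.univ.filter (G.Branch r)).exists_max_image Finset.card
    ⟨{r}, Finset.mem_filter.2 ⟨Finset.mem_univ _, .singleton r⟩⟩
  rw [Finset.mem_filter] at hS
  by_contra hne
  obtain ⟨v, hv⟩ := Finset.exists_of_ssubset (Finset.ssubset_univ_iff.2 (fun h => hne (h ▸ hS.2)))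
  obtain ⟨⟨⟨x, y⟩, hxy⟩, -, hx, hy⟩ :=
    (hG.preconnected r v).some.exists_boundary_dart (S : Set V) hS.2.root_mem hv.2
  have := hmax _ (Finset.mem_filter.2 ⟨Finset.mem_univ _, hS.2.insert hx hy hxy⟩)
  rw [Finset.card_insert_of_notMem hy] at this
  omega

end SimpleGraph

open SimpleGraph in
/-- For every tree `G` with `2 * n` vertices and all positive integers `a`, `b`
with `a + b = 2 * n`, the vertex set of `G` can be partitioned into a set `R`
of size `a` and its complement of size `b`, each carrying a tree structure all
of whose edges join vertices at distance at most `2` in `G`. -/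
theorem unbalanced_two_partition_dist_two {V : Type*} [Fintype V] [DecidableEq V]
    (G : SimpleGraph V) (hG : G.IsTree) (n a b : ℕ)
    (ha : 0 < a) (hb : 0 < b) (hab : a + b = 2 * n)
    (hcard : Fintype.card V = 2 * n) :
    ∃ R : Finset V, R.card = a ∧ Rᶜ.card = b ∧
      (∃ HR : SimpleGraph {x // x ∈ R}, HR.IsTree ∧
        ∀ u v : {x // x ∈ R}, HR.Adj u v → G.dist u.1 v.1 ≤ 2) ∧
      (∃ HB : SimpleGraph {x // x ∈ Rᶜ}, HB.IsTree ∧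
        ∀ u v : {x // x ∈ Rᶜ}, HB.Adj u v → G.dist u.1 v.1 ≤ 2) := by
  obtain ⟨r⟩ : Nonempty V := Fintype.card_pos_iff.1 (by omega)
  obtain ⟨R, hR, hRcard⟩ := (hG.connected.branch_univ r).exists_isRootedSplit (k := a)
    (by rw [Finset.card_univ]; omega)
  have hRc : Rᶜ.card = b := by rw [Finset.card_compl]; omega
  refine ⟨R, hRcard, hRc, exists_isTree_dist_le_two (Finset.card_pos.1 (by omega))
    hR.preconnected_left, exists_isTree_dist_le_two (Finset.card_pos.1 (by omega)) ?_⟩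
  rw [Finset.compl_eq_univ_sdiff]
  exact hR.preconnected_right
end

section
/- Let T be the tree consisting of a root v joined to k+1 disjoint paths each with k−1 vertices (k ≥ 4). Suppose T's vertices are partitioned into k parts of size k, each with a tree structure all of whose edges join vertices at distance at most 2 in T. If a part does not contain v, then it must contain at least two of the k+1 neighbors of v. Consequently k+1 ≥ 2(k−1), contradicting k ≥ 4; hence no such partition exists. -/
/-- The "spider" tree: a root (`none`) joined to `k + 1` disjoint paths, each
with `k - 1` vertices.  Vertex `some (p, j)` is the `j`-th vertex of path `p`. -/
def spider (k : ℕ) : SimpleGraph (Option (Fin (k + 1) × Fin (k - 1))) :=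
  SimpleGraph.fromRel (fun x y =>
    match x, y with
    | none, some (_, j) => j.val = 0
    | some (p, j), some (q, j') => p = q ∧ j'.val = j.val + 1
    | _, _ => False)

lemma spider_adj_some_some {k : ℕ} {p q : Fin (k + 1)} {j j' : Fin (k - 1)}
    (h : (spider k).Adj (some (p, j)) (some (q, j'))) : p = q := by
  rw [spider, SimpleGraph.fromRel_adj] at h
  rcases h with ⟨-, h | h⟩
  · exact h.1
  · exact h.1.symm

lemma spider_adj_none_some {k : ℕ} {p : Fin (k + 1)} {j : Fin (k - 1)}
    (h : (spider k).Adj none (some (p, j))) : j.val = 0 := by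
  rw [spider, SimpleGraph.fromRel_adj] at h
  rcases h with ⟨-, h | h⟩
  · exact h
  · exact h.elim

lemma spider_reach_aux (k : ℕ) (p : Fin (k + 1)) :
    ∀ n (h : n < k - 1), (spider k).Reachable none (some (p, ⟨n, h⟩)) := by
  intro n
  induction n with
  | zero =>
    intro h
    refine SimpleGraph.Adj.reachable ?_
    rw [spider, SimpleGraph.fromRel_adj]
    exact ⟨by simp, Or.inl rfl⟩
  | succ n ih =>
    intro h
    have h' : n < k - 1 := by omega
    refine (ih h').trans (SimpleGraph.Adj.reachable ?_)
    rw [spider, SimpleGraph.fromRel_adj]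
    refine ⟨by simp, Or.inl ⟨rfl, rfl⟩⟩

lemma spider_reach (k : ℕ) (p : Fin (k + 1)) (j : Fin (k - 1)) :
    (spider k).Reachable none (some (p, j)) := by
  obtain ⟨n, hn⟩ := j
  exact spider_reach_aux k p n hn

lemma spider_walk_cross {k : ℕ} {p q : Fin (k + 1)} {j j' : Fin (k - 1)} (hpq : p ≠ q) :
    ∀ {a b} (w : (spider k).Walk a b), w.length ≤ 2 →
      a = some (p, j) → b = some (q, j') → j.val = 0 ∧ j'.val = 0 := by
  intro a b w
  cases w with
  | nil =>
    intro _ ha hb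
    rw [ha] at hb
    simp only [Option.some.injEq, Prod.mk.injEq] at hb
    exact absurd hb.1 hpq
  | @cons _ m _ hadj w' =>
    cases w' with
    | nil =>
      intro _ ha hb
      subst ha; subst hb
      exact absurd (spider_adj_some_some hadj) hpq
    | @cons _ c _ hadj2 w'' =>
      intro hlen ha hb
      subst ha; subst hb
      have h0 : w''.length = 0 := by
        simp only [SimpleGraph.Walk.length_cons] at hlen; omega
      have hcd := w''.eq_of_length_eq_zero h0
      subst hcd
      cases m with
      | none =>
        exact ⟨spider_adj_none_some hadj.symm, spider_adj_none_some hadj2⟩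
      | some rm =>
        obtain ⟨r, jm⟩ := rm
        exact absurd ((spider_adj_some_some hadj).trans (spider_adj_some_some hadj2)) hpq

lemma spider_cross {k : ℕ} {p q : Fin (k + 1)} {j j' : Fin (k - 1)} (hpq : p ≠ q)
    (h : (spider k).dist (some (p, j)) (some (q, j')) ≤ 2) : j.val = 0 ∧ j'.val = 0 := by
  have hr : (spider k).Reachable (some (p, j)) (some (q, j')) :=
    (spider_reach k p j).symm.trans (spider_reach k q j')
  obtain ⟨w, hw⟩ := hr.exists_walk_length_eq_dist
  exact spider_walk_cross hpq w (hw ▸ h) rfl rfl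

lemma spider_part_two_starts (k : ℕ) (hk : 4 ≤ k)
    (P : Finset (Option (Fin (k + 1) × Fin (k - 1))))
    (G : SimpleGraph {x // x ∈ P}) (hcard : P.card = k) (htree : G.IsTree)
    (hdist : ∀ u v : {x // x ∈ P}, G.Adj u v → (spider k).dist u.1 v.1 ≤ 2)
    (hroot : none ∉ P) :
    2 ≤ (P ∩ (Finset.univ.image
        (fun p : Fin (k + 1) =>
          (some (p, ⟨0, by omega⟩) : Option (Fin (k + 1) × Fin (k - 1)))))).card := by
  set S := (Finset.univ.image
      (fun p : Fin (k + 1) =>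
        (some (p, ⟨0, by omega⟩) : Option (Fin (k + 1) × Fin (k - 1))))) with hSdef
  by_contra hcon
  have hle : (P ∩ S).card ≤ 1 := by omega
  set f : Option (Fin (k + 1) × Fin (k - 1)) → Fin (k + 1) :=
    fun x => x.elim 0 Prod.fst with hfdef
  -- every vertex of P is `some`
  have hsome : ∀ x ∈ P, ∃ p j, x = some (p, j) := by
    intro x hx
    match x with
    | none => exact absurd hx hroot
    | some (p, j) => exact ⟨p, j, rfl⟩
  have key : ∀ a b : {x // x ∈ P}, G.Adj a b → f a.1 = f b.1 := by
    intro a b hab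
    obtain ⟨p, j, ha⟩ := hsome a.1 a.2
    obtain ⟨q, j', hb⟩ := hsome b.1 b.2
    by_cases hpq : p = q
    · rw [ha, hb, hpq]; rfl
    · exfalso
      have hd := hdist a b hab
      rw [ha, hb] at hd
      obtain ⟨hj, hj'⟩ := spider_cross hpq hd
      have hne : a.1 ≠ b.1 := fun h => hab.ne (Subtype.ext h)
      have hmS : ∀ (r : Fin (k + 1)) (m : Fin (k - 1)), m.val = 0 → some (r, m) ∈ S := by
        intro r m hm
        rw [hSdef]
        refine Finset.mem_image.mpr ⟨r, Finset.mem_univ r, ?_⟩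
        congr 1
        exact Prod.ext rfl (Fin.ext hm.symm)
      have haS : a.1 ∈ P ∩ S := Finset.mem_inter.mpr ⟨a.2, ha ▸ hmS p j hj⟩
      have hbS : b.1 ∈ P ∩ S := Finset.mem_inter.mpr ⟨b.2, hb ▸ hmS q j' hj'⟩
      exact hne (Finset.card_le_one.mp hle a.1 haS b.1 hbS)
  -- f is constant on P via connectivity
  have const : ∀ a b : {x // x ∈ P}, f a.1 = f b.1 := by
    intro a b
    obtain ⟨w⟩ := htree.isConnected.preconnected a b
    induction w with
    | nil => rfl
    | cons h w ih => exact (key _ _ h).trans ih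
  -- P is contained in a single leg
  have hP0 : 0 < P.card := by omega
  obtain ⟨x0, hx0⟩ := Finset.card_pos.mp hP0
  obtain ⟨p0, j0, hx0eq⟩ := hsome x0 hx0
  have hsub : P ⊆ Finset.univ.image
      (fun m : Fin (k - 1) => (some (p0, m) : Option (Fin (k + 1) × Fin (k - 1)))) := by
    intro y hy
    obtain ⟨q, m, hyeq⟩ := hsome y hy
    have : f y = f x0 := const ⟨y, hy⟩ ⟨x0, hx0⟩
    rw [hyeq, hx0eq] at this
    have hq : q = p0 := this
    refine Finset.mem_image.mpr ⟨m, Finset.mem_univ m, ?_⟩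
    rw [hyeq, hq]
  have hcard2 : P.card ≤ k - 1 := by
    calc P.card ≤ _ := Finset.card_le_card hsub
    _ ≤ (Finset.univ : Finset (Fin (k - 1))).card := Finset.card_image_le
    _ = k - 1 := by simp
  omega

/-- For `k ≥ 4`, consider the spider tree `spider k` (root `v = none` joined to
`k + 1` paths of `k - 1` vertices, `k²` vertices in total).  For any partition
of its vertices into `k` parts of size `k` with tree structures all of whose
edges join vertices at distance at most `2`: every part not containing the
root contains at least two of the `k + 1` neighbors of the root; and in fact
no such partition exists at all. -/
theorem spider_no_balanced_partition_dist_two (k : ℕ) (hk : 4 ≤ k) :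
    (∀ (P : Fin k → Finset (Option (Fin (k + 1) × Fin (k - 1))))
       (H : (i : Fin k) → SimpleGraph {x // x ∈ P i}),
      (∀ i j, i ≠ j → Disjoint (P i) (P j)) →
      Finset.univ.biUnion P = Finset.univ →
      (∀ i, (P i).card = k) →
      (∀ i, (H i).IsTree) →
      (∀ i, ∀ u v : {x // x ∈ P i}, (H i).Adj u v → (spider k).dist u.1 v.1 ≤ 2) →
      ∀ i, (none : Option (Fin (k + 1) × Fin (k - 1))) ∉ P i →
        2 ≤ ((P i) ∩ (Finset.univ.image
          (fun p : Fin (k + 1) =>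
            (some (p, ⟨0, by omega⟩) : Option (Fin (k + 1) × Fin (k - 1)))))).card) ∧
    ¬ ∃ (P : Fin k → Finset (Option (Fin (k + 1) × Fin (k - 1))))
        (H : (i : Fin k) → SimpleGraph {x // x ∈ P i}),
      (∀ i j, i ≠ j → Disjoint (P i) (P j)) ∧
      Finset.univ.biUnion P = Finset.univ ∧
      (∀ i, (P i).card = k) ∧
      (∀ i, (H i).IsTree) ∧
      (∀ i, ∀ u v : {x // x ∈ P i}, (H i).Adj u v → (spider k).dist u.1 v.1 ≤ 2) := by
  constructor
  · intro P H _ _ hcards htrees hdists i hroot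
    exact spider_part_two_starts k hk (P i) (H i) (hcards i) (htrees i) (hdists i) hroot
  · rintro ⟨P, H, hdisj, hcover, hcards, htrees, hdists⟩
    set S := (Finset.univ.image
        (fun p : Fin (k + 1) =>
          (some (p, ⟨0, by omega⟩) : Option (Fin (k + 1) × Fin (k - 1))))) with hSdef
    have hS : S.card = k + 1 := by
      rw [hSdef, Finset.card_image_of_injective _ (by intro a b h; simpa using h)]
      simp
    -- root is in some part
    have : (none : Option (Fin (k + 1) × Fin (k - 1))) ∈ Finset.univ.biUnion P := by
      rw [hcover]; exact Finset.mem_univ _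
    obtain ⟨i0, -, hi0⟩ := Finset.mem_biUnion.mp this
    have h2 : ∀ i ∈ Finset.univ.erase i0, 2 ≤ (P i ∩ S).card := by
      intro i hi
      have hne : i ≠ i0 := (Finset.mem_erase.mp hi).1
      have hroot : (none : Option (Fin (k + 1) × Fin (k - 1))) ∉ P i := fun h => by
        have := (hdisj i i0 hne).le_bot (by simp [Finset.mem_inter, h, hi0] : none ∈ P i ∩ P i0)
        simp at this
      exact spider_part_two_starts k hk (P i) (H i) (hcards i) (htrees i) (hdists i) hroot
    have hsum : ∑ i ∈ Finset.univ.erase i0, (P i ∩ S).card ≤ S.card := by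
      rw [← Finset.card_biUnion (by
        intro a ha b hb hab
        exact Finset.disjoint_of_subset_left Finset.inter_subset_left
          (Finset.disjoint_of_subset_right Finset.inter_subset_left (hdisj a b hab)))]
      exact Finset.card_le_card (Finset.biUnion_subset.mpr fun i _ => Finset.inter_subset_right)
    have hlow : 2 * (k - 1) ≤ ∑ i ∈ Finset.univ.erase i0, (P i ∩ S).card := by
      calc 2 * (k - 1) = ∑ _i ∈ Finset.univ.erase i0, 2 := by
            rw [Finset.sum_const, Finset.card_erase_of_mem (Finset.mem_univ _)]
            simp [mul_comm]
        _ ≤ _ := Finset.sum_le_sum h2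
    omega
end

section
/- Every finite tree T has a Hamiltonian path in its cube T³; equivalently, the vertices of T can be ordered v_1,...,v_N so that consecutive vertices are at distance at most 3 in T. -/
/-!
Call a vertex set `s` of a tree convex if it contains every vertex on a geodesic between two
of its vertices. By strong induction on `s` one shows: for every `w ∈ s` there is a path of the
cube through exactly the vertices of `s`, from `w` to `w` or to a neighbour of `w`. If `s ≠ {w}`,
pick a neighbour `a ∈ s` of `w`; since the edge `wa` is a bridge, `s` splits into the convex halves
of vertices closer to `w` and closer to `a`. Traverse the first half from `w` to some `w'`, jump to
the end `a'` of a path of the second half starting at `a` (the jump `w' w a a'` has length at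
most three), and traverse that path backwards to `a`.
-/

/-- The cube of a graph `G`: same vertex set, with an edge between two distinct
vertices whenever there is a path with at most `3` edges between them in `G`. -/
def SimpleGraph.cube {V : Type*} (G : SimpleGraph V) : SimpleGraph V :=
  SimpleGraph.fromRel (fun u v => G.Reachable u v ∧ G.dist u v ≤ 3)

namespace SimpleGraph

variable {V : Type*} {G : SimpleGraph V}

theorem Connected.cube_adj (hG : G.Connected) {x y : V} :
    G.cube.Adj x y ↔ x ≠ y ∧ G.dist x y ≤ 3 := by
  simp [cube, hG.preconnected x y, hG.preconnected y x, dist_comm (u := y)]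

theorem Walk.dist_add_dist_le_length [DecidableEq V] {x y z : V} (p : G.Walk x y)
    (hz : z ∈ p.support) : G.dist x z + G.dist z y ≤ p.length :=
  (add_le_add (dist_le _) (dist_le _)).trans_eq <| by rw [← length_append, p.take_spec hz]

theorem Walk.IsPath.append_cons {u v x y : V} {p : G.Walk u v} {q : G.Walk x y}
    (hp : p.IsPath) (hq : q.IsPath) (h : G.Adj v x) (hpq : p.support.Disjoint q.support) :
    (p.append (cons h q)).IsPath := by
  rw [isPath_def, support_append, support_cons, List.tail_cons]
  exact List.nodup_append.2 ⟨hp.support_nodup, hq.support_nodup,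
    fun a ha b hb hab => hpq ha (hab ▸ hb)⟩

theorem IsTree.dist_add_dist_eq_of_adj (hG : G.IsTree) {u v x y : V} (huv : G.Adj u v)
    (hx : G.dist x u < G.dist x v) (hy : G.dist y v < G.dist y u) :
    G.dist x u + G.dist u y = G.dist x y := by
  classical
  obtain ⟨p, -, hp⟩ := hG.connected.exists_path_of_dist x y
  obtain ⟨a, -, ha⟩ := hG.connected.exists_path_of_dist u x
  obtain ⟨b, -, hb⟩ := hG.connected.exists_path_of_dist y v
  -- `uv` is a bridge, and neither geodesic `a` nor `b` can use it.
  have hbridge := isBridge_iff_forall_walk_mem_edges.1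
    (isAcyclic_iff_forall_adj_isBridge.1 hG.isAcyclic huv) (a.append (p.append b))
  have hva : s(u, v) ∉ a.edges := fun h => by
    have := a.dist_add_dist_le_length (a.snd_mem_support_of_mem_edges h)
    rw [dist_comm (u := u) (v := x), dist_comm (u := v) (v := x), dist_eq_one_iff_adj.2 huv] at *
    omega
  have hub : s(u, v) ∉ b.edges := fun h => by
    have := b.dist_add_dist_le_length (b.fst_mem_support_of_mem_edges h)
    have := dist_eq_one_iff_adj.2 huv
    omega
  have hup : u ∈ p.support := by
    simp only [Walk.edges_append, List.mem_append] at hbridge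
    exact p.fst_mem_support_of_mem_edges (by tauto)
  have := p.dist_add_dist_le_length hup
  have := hG.connected.dist_triangle (u := x) (v := u) (w := y)
  omega

def IsConvex (G : SimpleGraph V) (s : Set V) : Prop :=
  ∀ ⦃x⦄, x ∈ s → ∀ ⦃y⦄, y ∈ s → ∀ z, G.dist x z + G.dist z y = G.dist x y → z ∈ s

theorem IsConvex.exists_adj {s : Set V} (hs : G.IsConvex s) {u x : V} (hu : u ∈ s) (hx : x ∈ s)
    (hux : G.Reachable u x) (hne : u ≠ x) : ∃ a ∈ s, G.Adj u a := by
  obtain ⟨p, hp⟩ := hux.exists_walk_length_eq_dist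
  cases p with
  | nil => exact absurd rfl hne
  | cons h q =>
    refine ⟨_, hs hu hx _ ?_, h⟩
    have := dist_le q
    have := h.reachable.dist_triangle_left x
    simp only [dist_eq_one_iff_adj.2 h, Walk.length_cons] at *
    omega

theorem IsTree.isConvex_sep_dist_lt (hG : G.IsTree) {s : Set V} (hs : G.IsConvex s) {u v : V}
    (huv : G.Adj u v) : G.IsConvex {x ∈ s | G.dist x u < G.dist x v} := by
  rintro x ⟨hxs, hx⟩ y ⟨hys, hy⟩ z hz
  refine ⟨hs hxs hys z hz, ?_⟩
  by_contra! hzv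
  replace hzv := hzv.lt_of_ne' (hG.dist_ne_of_adj z huv)
  have hxz := hG.dist_add_dist_eq_of_adj huv hx hzv
  have hyz := hG.dist_add_dist_eq_of_adj huv hy hzv
  have : G.dist u z ≠ 0 := by
    rintro h
    rw [hG.connected.dist_eq_zero_iff] at h
    subst h
    simp [dist_eq_one_iff_adj.2 huv] at hzv
  have := hG.connected.dist_triangle (u := x) (v := u) (w := y)
  rw [dist_comm (u := z) (v := y), dist_comm (u := u) (v := y)] at *
  omega

theorem IsTree.sep_dist_lt_union (hG : G.IsTree) (s : Set V) {u v : V} (huv : G.Adj u v) :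
    {x ∈ s | G.dist x u < G.dist x v} ∪ {x ∈ s | G.dist x v < G.dist x u} = s := by
  ext x
  simp only [Set.mem_union, Set.mem_ofPred_eq, ← and_or_left, and_iff_left_iff_imp]
  exact fun _ => (hG.dist_ne_of_adj x huv).lt_or_gt

variable [DecidableEq V]

theorem IsTree.exists_isPath_cube_support_eq (hG : G.IsTree) (s : Finset V)
    (hs : G.IsConvex s) {w : V} (hw : w ∈ s) :
    ∃ w', G.dist w w' ≤ 1 ∧ ∃ p : G.cube.Walk w w', p.IsPath ∧ p.support.toFinset = s := by
  induction s using Finset.strongInduction generalizing w with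
  | H s ih =>
  obtain rfl | hnt := Finset.eq_singleton_or_nontrivial hw
  · exact ⟨w, by simp, .nil, by simp, by simp⟩
  obtain ⟨x, hx, hxw⟩ := hnt.exists_ne w
  obtain ⟨a, has, hwa⟩ := hs.exists_adj hw hx (hG.connected w x) (Ne.symm hxw)
  have hwa1 := dist_eq_one_iff_adj.2 hwa
  have haw1 := dist_eq_one_iff_adj.2 hwa.symm
  set sw := s.filter fun z => G.dist z w < G.dist z a
  set sa := s.filter fun z => G.dist z a < G.dist z w
  obtain ⟨w', hw', p, hp, hps⟩ := ih sw
    (Finset.filter_ssubset.2 ⟨a, has, by simp [haw1]⟩)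
    (by rw [Finset.coe_filter]; exact hG.isConvex_sep_dist_lt hs hwa)
    (Finset.mem_filter.2 ⟨hw, by simp [hwa1]⟩)
  obtain ⟨a', ha', q, hq, hqs⟩ := ih sa
    (Finset.filter_ssubset.2 ⟨w, hw, by simp [hwa1]⟩)
    (by rw [Finset.coe_filter]; exact hG.isConvex_sep_dist_lt hs hwa.symm)
    (Finset.mem_filter.2 ⟨has, by simp [haw1]⟩)
  have hdisj : Disjoint sw sa := Finset.disjoint_filter.2 fun _ _ h h' => (h.trans h').false
  have hpq : p.support.Disjoint q.reverse.support := by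
    rw [Walk.support_reverse, List.disjoint_reverse_right]
    exact fun z hzp hzq => Finset.disjoint_left.1 hdisj
      (hps ▸ List.mem_toFinset.2 hzp) (hqs ▸ List.mem_toFinset.2 hzq)
  have hjump : G.cube.Adj w' a' := by
    refine hG.connected.cube_adj.2 ⟨fun h => hpq p.end_mem_support ?_, ?_⟩
    · simp [h]
    · have := hG.connected.dist_triangle (u := w') (v := w) (w := a')
      have := hG.connected.dist_triangle (u := w) (v := a) (w := a')
      rw [dist_comm] at hw'
      omega
  refine ⟨a, hwa1.le, p.append (.cons hjump q.reverse), hp.append_cons hq.reverse hjump hpq, ?_⟩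
  rw [Walk.support_append, Walk.support_cons, List.tail_cons, List.toFinset_append,
    Walk.support_reverse, List.toFinset_reverse, hps, hqs, ← Finset.coe_inj]
  push_cast
  rw [Finset.coe_filter, Finset.coe_filter]
  exact hG.sep_dist_lt_union _ hwa

theorem Walk.IsHamiltonian.exists_fin_equiv_adj [Fintype V] {u v : V} {p : G.Walk u v}
    (hp : p.IsHamiltonian) : ∃ f : Fin (Fintype.card V) ≃ V,
      ∀ i j : Fin (Fintype.card V), (j : ℕ) = i + 1 → G.Adj (f i) (f j) := by
  refine ⟨(finCongr hp.length_support.symm).trans hp.getVertEquiv, fun i j hij => ?_⟩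
  simp only [Equiv.trans_apply, finCongr_apply, IsHamiltonian.getVertEquiv_apply,
    Function.comp_apply, Fin.val_cast, hij]
  exact p.adj_getVert_succ (by have := hp.length_eq; omega)

end SimpleGraph

/-- Every finite tree has a Hamiltonian path in its cube; equivalently, its
vertices can be ordered so that consecutive vertices are at distance at most
`3` in the tree. -/
theorem tree_cube_hamiltonian_path {V : Type*} [Fintype V] [DecidableEq V]
    (G : SimpleGraph V) (hG : G.IsTree) :
    (∃ (u v : V) (p : G.cube.Walk u v), p.IsHamiltonian) ∧
    ∃ f : Fin (Fintype.card V) ≃ V,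
      ∀ i j : Fin (Fintype.card V), (j : ℕ) = (i : ℕ) + 1 →
        G.dist (f i) (f j) ≤ 3 := by
  obtain ⟨w⟩ := hG.connected.nonempty
  obtain ⟨w', -, p, hp, hps⟩ :=
    hG.exists_isPath_cube_support_eq Finset.univ (fun _ _ _ _ z _ => by simp) (Finset.mem_univ w)
  have hham : p.IsHamiltonian :=
    hp.isHamiltonian_of_mem fun x => List.mem_toFinset.1 (hps ▸ Finset.mem_univ x)
  obtain ⟨f, hf⟩ := hham.exists_fin_equiv_adj
  exact ⟨⟨w, w', p, hham⟩, f, fun i j hij => (hG.connected.cube_adj.1 (hf i j hij)).2⟩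
end
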